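/- arXiv:2507.19048 — 2 statements merged into one kernel-verified Lean document; each statement's English description precedes it below -/
import Mathlib

section
/- Let r ≥ 1 and let z = (z₁, z₂, z₃) ∈ Mat(2r × 3r, ℂ) be written in blocks zⱼ ∈ Mat(2r × r, ℂ), and assume det(zᵢ | zⱼ) ≠ 0 for all 1 ≤ i < j ≤ 3. Then there exist g ∈ GL(2r, ℂ) and h₁, h₂, h₃ ∈ GL(r, ℂ) such that g · z · diag(h₁, h₂, h₃) is the 2r×3r matrix with block rows (1_r, 0, 1_r) and (0, 1_r, −1_r). -/
open Matrix

/-- The `2r × nr` matrix assembled from `n` block columns of size `2r × r`. -/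
def ofBlockCols (r n : ℕ) (z : Fin n → Matrix (Fin r ⊕ Fin r) (Fin r) ℂ) :
    Matrix (Fin r ⊕ Fin r) (Fin n × Fin r) ℂ :=
  Matrix.of fun i jk => z jk.1 i jk.2

/-- The `nr × nr` matrix assembled from an `n × n` array of `r × r` blocks. -/
def ofBlockMat (r n : ℕ) (H : Fin n → Fin n → Matrix (Fin r) (Fin r) ℂ) :
    Matrix (Fin n × Fin r) (Fin n × Fin r) ℂ :=
  Matrix.of fun jk lk => H jk.1 lk.1 jk.2 lk.2

/-!
Write `M = (z₀ | z₁)`. Since `M` is invertible, `z₂ = z₀ a + z₁ b` for some `r × r` blocks `a`, `b`,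
and then `det (z₀ | z₂) = det M · det b` and `det (z₁ | z₂) = det (z₁ | z₀) · det a` force `a` and
`b` to be invertible. With `h = (a, -b, 1)` the matrix `u = (z₀ a | -z₁ b)` is invertible and
`z₂ = z₀ a - (-z₁ b)`, so `g = u⁻¹` sends the three blocks to `(1, 0)`, `(0, 1)` and `(1, -1)`.
-/

lemma mul_ofBlockCols_mul_ofBlockMat_diagonal (r n : ℕ)
    (g : Matrix (Fin r ⊕ Fin r) (Fin r ⊕ Fin r) ℂ)
    (z : Fin n → Matrix (Fin r ⊕ Fin r) (Fin r) ℂ) (h : Fin n → Matrix (Fin r) (Fin r) ℂ) :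
    g * ofBlockCols r n z * ofBlockMat r n (fun i j => if i = j then h i else 0) =
      ofBlockCols r n (fun j => g * z j * h j) := by
  ext i ⟨j, k⟩
  simp only [ofBlockCols, ofBlockMat, mul_apply, of_apply, Fintype.sum_prod_type]
  rw [Finset.sum_eq_single j]
  · simp
  · intro l _ hl
    simp [hl]
  · simp

section

variable {R : Type*} [CommRing R] {n n₁ n₂ p : Type*} [Fintype n] [Fintype n₁] [Fintype n₂]
  [DecidableEq n] [DecidableEq n₁] [DecidableEq n₂]

lemma det_fromCols_mul_mul (x : Matrix (n₁ ⊕ n₂) n₁ R) (y : Matrix (n₁ ⊕ n₂) n₂ R)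
    (a : Matrix n₁ n₁ R) (c : Matrix n₂ n₂ R) :
    (fromCols (x * a) (y * c)).det = (fromCols x y).det * (a.det * c.det) := by
  rw [← det_fromBlocks_zero₂₁ a 0 c, ← det_mul, fromCols_mul_fromBlocks]
  simp

lemma det_fromCols_mul_add_mul (x : Matrix (n₁ ⊕ n₂) n₁ R) (y : Matrix (n₁ ⊕ n₂) n₂ R)
    (a : Matrix n₁ n₂ R) (b : Matrix n₂ n₂ R) :
    (fromCols x (x * a + y * b)).det = (fromCols x y).det * b.det := by
  have : fromCols x (x * a + y * b) = fromCols x y * fromBlocks 1 a 0 b := by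
    simp [fromCols_mul_fromBlocks]
  rw [this, det_mul, det_fromBlocks_zero₂₁, det_one, one_mul]

lemma exists_eq_mul_add_mul (x : Matrix (n₁ ⊕ n₂) n₁ R) (y : Matrix (n₁ ⊕ n₂) n₂ R)
    (hxy : IsUnit (fromCols x y).det) (w : Matrix (n₁ ⊕ n₂) p R) :
    ∃ (a : Matrix n₁ p R) (b : Matrix n₂ p R), w = x * a + y * b := by
  set v := (fromCols x y)⁻¹ * w
  refine ⟨v.toRows₁, v.toRows₂, ?_⟩
  rw [← fromCols_mul_fromRows, fromRows_toRows, mul_nonsing_inv_cancel_left _ _ hxy]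

lemma exists_GL_mul_mul_add_mul_eq_fromRows (x : Matrix (n₁ ⊕ n₂) n₁ R)
    (y : Matrix (n₁ ⊕ n₂) n₂ R) (hxy : IsUnit (fromCols x y).det) :
    ∃ g : GL (n₁ ⊕ n₂) R, ∀ (a : Matrix n₁ p R) (b : Matrix n₂ p R),
      (g : Matrix (n₁ ⊕ n₂) (n₁ ⊕ n₂) R) * (x * a + y * b) = fromRows a b := by
  obtain ⟨M, hM⟩ := (isUnit_iff_isUnit_det _).2 hxy
  refine ⟨M⁻¹, fun a b => ?_⟩
  rw [← fromCols_mul_fromRows, ← hM, ← Matrix.mul_assoc, M.inv_mul, Matrix.one_mul]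

theorem exists_normal_form_of_isUnit_det_fromCols (z₀ z₁ z₂ : Matrix (n ⊕ n) n R)
    (h₀₁ : IsUnit (fromCols z₀ z₁).det) (h₀₂ : IsUnit (fromCols z₀ z₂).det)
    (h₁₂ : IsUnit (fromCols z₁ z₂).det) :
    ∃ (g : GL (n ⊕ n) R) (h₀ h₁ h₂ : GL n R),
      (g : Matrix (n ⊕ n) (n ⊕ n) R) * z₀ * (h₀ : Matrix n n R) = fromRows 1 0 ∧
      (g : Matrix (n ⊕ n) (n ⊕ n) R) * z₁ * (h₁ : Matrix n n R) = fromRows 0 1 ∧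
      (g : Matrix (n ⊕ n) (n ⊕ n) R) * z₂ * (h₂ : Matrix n n R) = fromRows 1 (-1) := by
  obtain ⟨a, b, rfl⟩ := exists_eq_mul_add_mul z₀ z₁ h₀₁ z₂
  have ha : IsUnit a.det := by
    rw [add_comm, det_fromCols_mul_add_mul] at h₁₂
    exact isUnit_of_mul_isUnit_right h₁₂
  have hb : IsUnit b.det := by
    rw [det_fromCols_mul_add_mul] at h₀₂
    exact isUnit_of_mul_isUnit_right h₀₂
  obtain ⟨A, rfl⟩ := (isUnit_iff_isUnit_det a).2 ha
  obtain ⟨B, rfl⟩ := (isUnit_iff_isUnit_det b).2 hb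
  have hAB :
      IsUnit (fromCols (z₀ * (A : Matrix n n R)) (z₁ * ((-B : GL n R) : Matrix n n R))).det := by
    rw [det_fromCols_mul_mul, Units.val_neg, det_neg]
    exact h₀₁.mul (ha.mul ((isUnit_neg_one.pow _).mul hb))
  obtain ⟨g, hg⟩ := exists_GL_mul_mul_add_mul_eq_fromRows (p := n) _ _ hAB
  refine ⟨g, A, -B, 1, ?_, ?_, ?_⟩
  · simpa [Matrix.mul_assoc] using hg 1 0
  · simpa [Matrix.mul_assoc] using hg 0 1
  · simpa [Matrix.mul_assoc] using hg 1 (-1)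

end

theorem normal_form_partition_111_general (r : ℕ)
    (z : Fin 3 → Matrix (Fin r ⊕ Fin r) (Fin r) ℂ)
    (hz : ∀ i j : Fin 3, i < j → (fromCols (z i) (z j)).det ≠ 0) :
    ∃ (g : GL (Fin r ⊕ Fin r) ℂ) (h : Fin 3 → GL (Fin r) ℂ),
      (g : Matrix (Fin r ⊕ Fin r) (Fin r ⊕ Fin r) ℂ) * ofBlockCols r 3 z *
          ofBlockMat r 3 (fun i j => if i = j then (h i : Matrix (Fin r) (Fin r) ℂ) else 0) =
        ofBlockCols r 3 ![fromRows 1 0, fromRows 0 1, fromRows 1 (-1)] := by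
  obtain ⟨g, h₀, h₁, h₂, e₀, e₁, e₂⟩ := exists_normal_form_of_isUnit_det_fromCols (z 0) (z 1) (z 2)
    (isUnit_iff_ne_zero.2 (hz 0 1 (by decide))) (isUnit_iff_ne_zero.2 (hz 0 2 (by decide)))
    (isUnit_iff_ne_zero.2 (hz 1 2 (by decide)))
  refine ⟨g, ![h₀, h₁, h₂], ?_⟩
  rw [mul_ofBlockCols_mul_ofBlockMat_diagonal]
  congr 1
  funext j
  fin_cases j
  exacts [e₀, e₁, e₂]

/-- Normal form lemma for `(m, N) = (2r, 3r)`, partition `λ = (1,1,1)`: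
any `z = (z₁, z₂, z₃)` with `det(zᵢ | zⱼ) ≠ 0` for `i < j` can be brought, by the
action of `GL(2r, ℂ) × H_{(1,1,1)}`, to the normal form with block rows
`(1_r, 0, 1_r)` and `(0, 1_r, −1_r)`. -/
theorem normal_form_partition_111 (r : ℕ) (hr : 1 ≤ r)
    (z : Fin 3 → Matrix (Fin r ⊕ Fin r) (Fin r) ℂ)
    (hz : ∀ i j : Fin 3, i < j → (fromCols (z i) (z j)).det ≠ 0) :
    ∃ (g : GL (Fin r ⊕ Fin r) ℂ) (h : Fin 3 → GL (Fin r) ℂ),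
      (g : Matrix (Fin r ⊕ Fin r) (Fin r ⊕ Fin r) ℂ) * ofBlockCols r 3 z *
          ofBlockMat r 3 (fun i j => if i = j then (h i : Matrix (Fin r) (Fin r) ℂ) else 0) =
        ofBlockCols r 3 ![fromRows 1 0, fromRows 0 1, fromRows 1 (-1)] :=
  normal_form_partition_111_general r z hz
end

section
/- Let r ≥ 1 and let z = (z₀, z₁, z₂) ∈ Mat(2r × 3r, ℂ) be written in blocks zᵢ ∈ Mat(2r × r, ℂ), and assume det(z₀ | z₁) ≠ 0. Then there exist g ∈ GL(2r, ℂ), h₀ ∈ GL(r, ℂ) and h₁, h₂ ∈ Mat(r×r, ℂ) such that g · z · h equals the 2r×3r matrix with block rows (1_r, 0, 0) and (0, 1_r, 0), where h ∈ Mat(3r × 3r, ℂ) is the block matrix with rows of r×r blocks [[h₀, h₁, h₂], [0, h₀, h₁], [0, 0, h₀]]. -/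
open Matrix

lemma mul_ofBlockCols (r n : ℕ) (M : Matrix (Fin r ⊕ Fin r) (Fin r ⊕ Fin r) ℂ)
    (z : Fin n → Matrix (Fin r ⊕ Fin r) (Fin r) ℂ) :
    M * ofBlockCols r n z = ofBlockCols r n (fun j => M * z j) := by
  ext i ⟨j, k⟩
  simp [ofBlockCols, Matrix.mul_apply]

lemma ofBlockCols_mul_ofBlockMat (r n : ℕ)
    (z : Fin n → Matrix (Fin r ⊕ Fin r) (Fin r) ℂ)
    (H : Fin n → Fin n → Matrix (Fin r) (Fin r) ℂ) :
    ofBlockCols r n z * ofBlockMat r n H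
      = ofBlockCols r n (fun j => ∑ l, z l * H l j) := by
  ext i ⟨j, k⟩
  simp [ofBlockCols, ofBlockMat, Matrix.mul_apply, Fintype.sum_prod_type, Matrix.sum_apply]

/-- Normal form lemma for `(m, N) = (2r, 3r)`, partition `λ = (3)`:
any `z = (z₀, z₁, z₂)` with `det(z₀ | z₁) ≠ 0` can be brought, by the action of
`GL(2r, ℂ) × H_{(3)}` (the generalized Jordan group `J_r(3)`), to the normal form
with block rows `(1_r, 0, 0)` and `(0, 1_r, 0)`. -/
theorem normal_form_partition_3 (r : ℕ) (hr : 1 ≤ r)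
    (z : Fin 3 → Matrix (Fin r ⊕ Fin r) (Fin r) ℂ)
    (h01 : (fromCols (z 0) (z 1)).det ≠ 0) :
    ∃ (g : GL (Fin r ⊕ Fin r) ℂ) (h₀ : GL (Fin r) ℂ) (h₁ h₂ : Matrix (Fin r) (Fin r) ℂ),
      (g : Matrix (Fin r ⊕ Fin r) (Fin r ⊕ Fin r) ℂ) * ofBlockCols r 3 z *
          ofBlockMat r 3
            ![![(h₀ : Matrix (Fin r) (Fin r) ℂ), h₁, h₂],
              ![0, (h₀ : Matrix (Fin r) (Fin r) ℂ), h₁],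
              ![0, 0, (h₀ : Matrix (Fin r) (Fin r) ℂ)]] =
        ofBlockCols r 3 ![fromRows 1 0, fromRows 0 1, 0] := by
  set A := fromCols (z 0) (z 1) with hA
  have hAunit : IsUnit A := (Matrix.isUnit_iff_isUnit_det A).mpr (isUnit_iff_ne_zero.mpr h01)
  -- write z 2 = z 0 * a + z 1 * b
  set w : Matrix (Fin r ⊕ Fin r) (Fin r) ℂ := A⁻¹ * z 2 with hw
  set a := toRows₁ w with ha
  set b := toRows₂ w with hb
  have hz2 : z 0 * a + z 1 * b = z 2 := by
    have : A * w = z 2 := by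
      rw [hw, ← Matrix.mul_assoc, Matrix.mul_nonsing_inv A
        ((Matrix.isUnit_iff_isUnit_det A).mp hAunit), Matrix.one_mul]
    calc z 0 * a + z 1 * b = A * fromRows a b := by
            rw [hA, fromCols_mul_fromRows]
      _ = A * w := by rw [ha, hb, fromRows_toRows]
      _ = z 2 := this
  -- the matrix B = (z0 | z1 - z0 b) is invertible
  set B := fromCols (z 0) (z 1 - z 0 * b) with hB
  have hBeq : B = A * fromBlocks 1 (-b) 0 1 := by
    rw [hA, fromCols_mul_fromBlocks, hB, sub_eq_neg_add]
    simp
  have hBunit : IsUnit B := by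
    rw [hBeq]
    exact hAunit.mul ((Matrix.isUnit_iff_isUnit_det _).mpr (by
      simp [Matrix.det_fromBlocks_zero₂₁]))
  set g : GL (Fin r ⊕ Fin r) ℂ := hBunit.unit⁻¹ with hg
  have hgB : (g : Matrix (Fin r ⊕ Fin r) (Fin r ⊕ Fin r) ℂ) * B = 1 := by
    have := hBunit.unit⁻¹.inv_mul
    simpa [hg, hBunit.unit_spec] using hBunit.unit.inv_mul
  have hgcols : (g : Matrix (Fin r ⊕ Fin r) (Fin r ⊕ Fin r) ℂ) * z 0 = fromRows 1 0 ∧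
      (g : Matrix (Fin r ⊕ Fin r) (Fin r ⊕ Fin r) ℂ) * (z 1 - z 0 * b) = fromRows 0 1 := by
    have h1 : (g : Matrix (Fin r ⊕ Fin r) (Fin r ⊕ Fin r) ℂ) * B
        = fromCols (fromRows 1 0) (fromRows 0 1) := by
      rw [hgB, fromCols_fromRows_eq_fromBlocks, fromBlocks_one]
    rw [hB, mul_fromCols] at h1
    exact (fromCols_ext_iff _ _ _ _).mp h1
  obtain ⟨hg0, hg1'⟩ := hgcols
  refine ⟨g, 1, -b, -a, ?_⟩
  rw [Matrix.mul_assoc, ofBlockCols_mul_ofBlockMat, mul_ofBlockCols]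
  have key : ∀ j, (g : Matrix (Fin r ⊕ Fin r) (Fin r ⊕ Fin r) ℂ) *
      ∑ l, z l * ![![((1 : GL (Fin r) ℂ) : Matrix (Fin r) (Fin r) ℂ), -b, -a],
              ![0, ((1 : GL (Fin r) ℂ) : Matrix (Fin r) (Fin r) ℂ), -b],
              ![0, 0, ((1 : GL (Fin r) ℂ) : Matrix (Fin r) (Fin r) ℂ)]] l j
      = ![fromRows 1 0, fromRows 0 1, (0 : Matrix (Fin r ⊕ Fin r) (Fin r) ℂ)] j := by
    have hone : ((1 : GL (Fin r) ℂ) : Matrix (Fin r) (Fin r) ℂ) = 1 := rfl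
    intro j
    fin_cases j
    · simp [Fin.sum_univ_three, hone, hg0, Matrix.cons_val_zero, Matrix.cons_val_one, Matrix.head_cons, Matrix.cons_val_two, Matrix.tail_cons, Matrix.vecHead, Matrix.vecTail]
    · rw [sub_eq_neg_add] at hg1'
      simp [Fin.sum_univ_three, hone, Matrix.mul_neg, hg1', Matrix.cons_val_zero, Matrix.cons_val_one, Matrix.head_cons, Matrix.cons_val_two, Matrix.tail_cons, Matrix.vecHead, Matrix.vecTail]
    · have hz2' : -(z 0 * a) + (-(z 1 * b) + z 2) = 0 := by rw [← hz2]; abel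
      simp [Fin.sum_univ_three, hone, Matrix.mul_neg, add_assoc, hz2', Matrix.cons_val_zero, Matrix.cons_val_one, Matrix.head_cons, Matrix.cons_val_two, Matrix.tail_cons, Matrix.vecHead, Matrix.vecTail]
  exact congrArg (ofBlockCols r 3) (funext key)
end
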